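/- If x is a numeric pregame with birthday g(x) = 1 and y is a finite-born numeric pregame with birthday g(y) = m, then the birthday of their product is g(x·y) = m. -/

import Mathlib

universe u

namespace SetTheory

/-- Pre-games (removed from Mathlib; reproduced with the definitions of Mathlib of December 2024). -/
inductive PGame : Type (u + 1)
  | mk : ∀ α β : Type u, (α → PGame) → (β → PGame) → PGame

namespace PGame

/-- Simultaneous definition of `≤` (first component) and `⧏` (second component). -/
noncomputable def leLF : PGame.{u} → PGame.{u} → Prop × Prop
  | mk _ xr xL xR, y =>
    PGame.rec (motive := fun _ => Prop × Prop)
      (fun yl yr yL yR ihL ihR =>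
        ((∀ i, (leLF (xL i) (mk yl yr yL yR)).2) ∧ ∀ j, (ihR j).2,
         (∃ i, (ihL i).1) ∨ ∃ j : xr, (leLF (xR j) (mk yl yr yL yR)).1)) y

instance : LE PGame.{u} :=
  ⟨fun x y => (leLF x y).1⟩

instance : LT PGame.{u} :=
  ⟨fun x y => x ≤ y ∧ ¬y ≤ x⟩

def neg : PGame.{u} → PGame.{u}
  | ⟨l, r, L, R⟩ => ⟨r, l, fun i => neg (R i), fun i => neg (L i)⟩

instance : Neg PGame.{u} :=
  ⟨neg⟩

noncomputable instance : Add PGame.{u} :=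
  ⟨fun x y => by
    induction x generalizing y with | mk xl xr _ _ IHxl IHxr => _
    induction y with | mk yl yr yL yR IHyl IHyr => _
    have y := mk yl yr yL yR
    refine ⟨xl ⊕ yl, xr ⊕ yr, Sum.rec ?_ ?_, Sum.rec ?_ ?_⟩
    · exact fun i => IHxl i y
    · exact IHyl
    · exact fun i => IHxr i y
    · exact IHyr⟩

noncomputable instance : Sub PGame.{u} :=
  ⟨fun x y => x + -y⟩

noncomputable instance : Mul PGame.{u} :=
  ⟨fun x y => by
    induction x generalizing y with | mk xl xr _ _ IHxl IHxr => _
    induction y with | mk yl yr yL yR IHyl IHyr => _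
    have y := mk yl yr yL yR
    refine ⟨(xl × yl) ⊕ (xr × yr), (xl × yr) ⊕ (xr × yl), ?_, ?_⟩ <;> rintro (⟨i, j⟩ | ⟨i, j⟩)
    exacts [IHxl i y + IHyl j - IHxl i (yL j), IHxr i y + IHyr j - IHxr i (yR j),
      IHxl i y + IHyr j - IHxl i (yR j), IHxr i y + IHyl j - IHxr i (yL j)]⟩

def Numeric : PGame.{u} → Prop
  | ⟨_, _, L, R⟩ => (∀ i j, L i < R j) ∧ (∀ i, Numeric (L i)) ∧ ∀ j, Numeric (R j)

set_option linter.deprecated false in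
noncomputable def birthday : PGame.{u} → Ordinal.{u}
  | ⟨_, _, xL, xR⟩ =>
    max (Ordinal.lsub.{u, u} fun i => birthday (xL i)) (Ordinal.lsub.{u, u} fun i => birthday (xR i))

end PGame

end SetTheory

open SetTheory PGame Ordinal

/-!
Every option of a game born on day 1 is born on day 0, i.e. has no options, and there is at least
one such option. If `a` has no options then neither has `a * z`, and adding or subtracting a game
without options does not change birthdays, so for options `a` of `x` and `z` of `y` the option
`a * y + x * z - a * z` of `x * y` has the birthday of `x * z`. By induction on `y`, the options
of `x * y` thus have the same birthdays as those of `y`, each one being realised because `x` has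
some option.
-/

namespace SetTheory.PGame

theorem mk_add_mk {xl xr yl yr : Type u} (xL : xl → PGame.{u}) (xR : xr → PGame.{u})
    (yL : yl → PGame.{u}) (yR : yr → PGame.{u}) :
    mk xl xr xL xR + mk yl yr yL yR =
      mk (xl ⊕ yl) (xr ⊕ yr)
        (Sum.elim (fun i => xL i + mk yl yr yL yR) fun j => mk xl xr xL xR + yL j)
        (Sum.elim (fun i => xR i + mk yl yr yL yR) fun j => mk xl xr xL xR + yR j) :=
  rfl

theorem mk_mul_mk {xl xr yl yr : Type u} (xL : xl → PGame.{u}) (xR : xr → PGame.{u})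
    (yL : yl → PGame.{u}) (yR : yr → PGame.{u}) :
    mk xl xr xL xR * mk yl yr yL yR =
      mk (xl × yl ⊕ xr × yr) (xl × yr ⊕ xr × yl)
        (Sum.elim
          (fun p => xL p.1 * mk yl yr yL yR + mk xl xr xL xR * yL p.2 - xL p.1 * yL p.2)
          (fun p => xR p.1 * mk yl yr yL yR + mk xl xr xL xR * yR p.2 - xR p.1 * yR p.2))
        (Sum.elim
          (fun p => xL p.1 * mk yl yr yL yR + mk xl xr xL xR * yR p.2 - xL p.1 * yR p.2)
          (fun p => xR p.1 * mk yl yr yL yR + mk xl xr xL xR * yL p.2 - xR p.1 * yL p.2)) :=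
  rfl

section Birthday

variable {xl xr : Type u} {xL : xl → PGame.{u}} {xR : xr → PGame.{u}}

set_option linter.deprecated false in
theorem birthday_mk_le_iff {a : Ordinal.{u}} :
    (mk xl xr xL xR).birthday ≤ a ↔ (∀ i, (xL i).birthday < a) ∧ ∀ j, (xR j).birthday < a := by
  rw [birthday, max_le_iff, lsub_le_iff, lsub_le_iff]

theorem birthday_moveLeft_lt (i : xl) : (xL i).birthday < (mk xl xr xL xR).birthday :=
  (birthday_mk_le_iff.1 le_rfl).1 i

theorem birthday_moveRight_lt (j : xr) : (xR j).birthday < (mk xl xr xL xR).birthday :=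
  (birthday_mk_le_iff.1 le_rfl).2 j

theorem birthday_mk_eq_zero_iff : (mk xl xr xL xR).birthday = 0 ↔ IsEmpty xl ∧ IsEmpty xr := by
  simp only [← nonpos_iff_eq_zero, birthday_mk_le_iff, not_lt_zero, isEmpty_iff]

theorem birthday_mk_le_one_iff :
    (mk xl xr xL xR).birthday ≤ 1 ↔ (∀ i, (xL i).birthday = 0) ∧ ∀ j, (xR j).birthday = 0 := by
  simp only [birthday_mk_le_iff, Order.lt_one_iff]

theorem birthday_mk_eq_one_iff :
    (mk xl xr xL xR).birthday = 1 ↔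
      (∀ i, (xL i).birthday = 0) ∧ (∀ j, (xR j).birthday = 0) ∧ Nonempty (xl ⊕ xr) := by
  rw [← and_assoc, ← birthday_mk_le_one_iff, nonempty_sum, ← not_isEmpty_iff, ← not_isEmpty_iff,
    ← not_and_or, ← birthday_mk_eq_zero_iff, ← Ne, ← Order.one_le_iff_ne_zero, le_antisymm_iff]

theorem birthday_neg (x : PGame.{u}) : (-x).birthday = x.birthday := by
  induction x with
  | mk xl xr xL xR ihL ihR =>
    refine le_antisymm (birthday_mk_le_iff.2 ⟨fun j => ?_, fun i => ?_⟩)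
      (birthday_mk_le_iff.2 ⟨fun i => ?_, fun j => ?_⟩)
    · exact (ihR j).trans_lt (birthday_moveRight_lt j)
    · exact (ihL i).trans_lt (birthday_moveLeft_lt i)
    · exact (ihL i).symm.trans_lt (birthday_moveRight_lt (xR := fun i => -xL i) i)
    · exact (ihR j).symm.trans_lt (birthday_moveLeft_lt (xL := fun j => -xR j) j)

theorem birthday_zero_add {a : PGame.{u}} (ha : a.birthday = 0) (b : PGame.{u}) :
    (a + b).birthday = b.birthday := by
  obtain ⟨al, ar, aL, aR⟩ := a
  obtain ⟨_, _⟩ := birthday_mk_eq_zero_iff.1 ha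
  induction b with
  | mk bl br bL bR ihL ihR =>
    rw [mk_add_mk]
    refine le_antisymm (birthday_mk_le_iff.2 ⟨?_, ?_⟩)
      (birthday_mk_le_iff.2 ⟨fun i => ?_, fun j => ?_⟩)
    · rintro (i | i)
      · exact isEmptyElim i
      · exact (ihL i).trans_lt (birthday_moveLeft_lt i)
    · rintro (j | j)
      · exact isEmptyElim j
      · exact (ihR j).trans_lt (birthday_moveRight_lt j)
    · exact (ihL i).symm.trans_lt (birthday_moveLeft_lt (Sum.inr i))
    · exact (ihR j).symm.trans_lt (birthday_moveRight_lt (Sum.inr j))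

theorem birthday_add_zero {a : PGame.{u}} (ha : a.birthday = 0) (b : PGame.{u}) :
    (b + a).birthday = b.birthday := by
  obtain ⟨al, ar, aL, aR⟩ := a
  obtain ⟨_, _⟩ := birthday_mk_eq_zero_iff.1 ha
  induction b with
  | mk bl br bL bR ihL ihR =>
    rw [mk_add_mk]
    refine le_antisymm (birthday_mk_le_iff.2 ⟨?_, ?_⟩)
      (birthday_mk_le_iff.2 ⟨fun i => ?_, fun j => ?_⟩)
    · rintro (i | i)
      · exact (ihL i).trans_lt (birthday_moveLeft_lt i)
      · exact isEmptyElim i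
    · rintro (j | j)
      · exact (ihR j).trans_lt (birthday_moveRight_lt j)
      · exact isEmptyElim j
    · exact (ihL i).symm.trans_lt (birthday_moveLeft_lt (Sum.inl i))
    · exact (ihR j).symm.trans_lt (birthday_moveRight_lt (Sum.inl j))

theorem birthday_sub_zero {a : PGame.{u}} (ha : a.birthday = 0) (b : PGame.{u}) :
    (b - a).birthday = b.birthday :=
  birthday_add_zero ((birthday_neg a).trans ha) b

theorem birthday_zero_mul {a : PGame.{u}} (ha : a.birthday = 0) (b : PGame.{u}) :
    (a * b).birthday = 0 := by
  obtain ⟨al, ar, aL, aR⟩ := a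
  obtain ⟨_, _⟩ := birthday_mk_eq_zero_iff.1 ha
  obtain ⟨bl, br, bL, bR⟩ := b
  rw [mk_mul_mk, birthday_mk_eq_zero_iff]
  exact ⟨inferInstance, inferInstance⟩

theorem birthday_mulOption_of_birthday_eq_zero {a : PGame.{u}} (ha : a.birthday = 0)
    (x y z : PGame.{u}) : (a * y + x * z - a * z).birthday = (x * z).birthday := by
  rw [birthday_sub_zero (birthday_zero_mul ha z), birthday_zero_add (birthday_zero_mul ha y)]

theorem birthday_mk_mul_of_birthday_moves_eq_zero (hL : ∀ i, (xL i).birthday = 0)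
    (hR : ∀ j, (xR j).birthday = 0) (hx : Nonempty (xl ⊕ xr)) (y : PGame.{u}) :
    (mk xl xr xL xR * y).birthday = y.birthday := by
  induction y with
  | mk yl yr yL yR ihL ihR =>
    have optL {a : PGame.{u}} (ha : a.birthday = 0) (j : yl) :
        (a * mk yl yr yL yR + mk xl xr xL xR * yL j - a * yL j).birthday = (yL j).birthday :=
      (birthday_mulOption_of_birthday_eq_zero ha _ _ _).trans (ihL j)
    have optR {a : PGame.{u}} (ha : a.birthday = 0) (j : yr) :
        (a * mk yl yr yL yR + mk xl xr xL xR * yR j - a * yR j).birthday = (yR j).birthday :=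
      (birthday_mulOption_of_birthday_eq_zero ha _ _ _).trans (ihR j)
    rw [mk_mul_mk]
    refine le_antisymm (birthday_mk_le_iff.2 ⟨?_, ?_⟩)
      (birthday_mk_le_iff.2 ⟨fun j => ?_, fun j => ?_⟩)
    · rintro (⟨i, j⟩ | ⟨i, j⟩)
      · exact (optL (hL i) j).trans_lt (birthday_moveLeft_lt j)
      · exact (optR (hR i) j).trans_lt (birthday_moveRight_lt j)
    · rintro (⟨i, j⟩ | ⟨i, j⟩)
      · exact (optR (hL i) j).trans_lt (birthday_moveRight_lt j)
      · exact (optL (hR i) j).trans_lt (birthday_moveLeft_lt j)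
    · obtain ⟨i | i⟩ := hx
      · exact (optL (hL i) j).symm.trans_lt (birthday_moveLeft_lt (Sum.inl (i, j)))
      · exact (optL (hR i) j).symm.trans_lt (birthday_moveRight_lt (Sum.inr (i, j)))
    · obtain ⟨i | i⟩ := hx
      · exact (optR (hL i) j).symm.trans_lt (birthday_moveRight_lt (Sum.inl (i, j)))
      · exact (optR (hR i) j).symm.trans_lt (birthday_moveLeft_lt (Sum.inr (i, j)))

theorem birthday_mul_of_birthday_eq_one {x : PGame.{u}} (hx : x.birthday = 1) (y : PGame.{u}) :
    (x * y).birthday = y.birthday := by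
  obtain ⟨xl, xr, xL, xR⟩ := x
  obtain ⟨hL, hR, hne⟩ := birthday_mk_eq_one_iff.1 hx
  exact birthday_mk_mul_of_birthday_moves_eq_zero hL hR hne y

end Birthday

end SetTheory.PGame

theorem birthday_mul_of_birthday_one_general (x y : PGame)
    (hx1 : x.birthday = 1) (m : ℕ) (hym : y.birthday = (m : Ordinal)) :
    (x * y).birthday = (m : Ordinal) := by
  rw [birthday_mul_of_birthday_eq_one hx1, hym]

theorem birthday_mul_of_birthday_one (x y : PGame) (hx : x.Numeric) (hy : y.Numeric)
    (hx1 : x.birthday = 1) (m : ℕ) (hym : y.birthday = (m : Ordinal)) :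
    (x * y).birthday = (m : Ordinal) :=
  birthday_mul_of_birthday_one_general x y hx1 m hym
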